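/- (Theorem 2.2, interval lower bound.) Let X ⊆ {0,1}^n be finite and nonempty and let 0 ≤ α₁ ≤ α₂ ≤ 1/2. Let (x₁*, y₁*) minimize (x,y) ↦ g(x,y,α₁) + (α₂ − α₁)·underline∂g(x,y) over X × X and let (x₂*, y₂*) minimize (x,y) ↦ g(x,y,α₂) + (α₁ − α₂)·overline∂g(x,y) over X × X. Set s₁ = underline∂g(x₁*, y₁*) and s₂ = overline∂g(x₂*, y₂*), and assume s₁ ≤ 0 ≤ s₂ with s₁ < s₂. Let α' = (h(α₂) − h(α₁) + α₁·s₁ − α₂·s₂)/(s₁ − s₂) be the crossing point of the two affine lower bounds f₁(α) = h(α₁) + (α − α₁)s₁ and f₂(α) = h(α₂) + (α − α₂)s₂, and assume α' ∈ [α₁, α₂]. Then for all α ∈ [α₁, α₂], h(α) ≥ L, where L = h(α₁) + (α' − α₁)·s₁. -/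
import Mathlib


/-- `‖v‖^(Γ)`: the maximum over subsets `S` of cardinality `Γ` of `Σ_{i∈S} v i`. -/
noncomputable def gammaNorm (n : ℕ) (Γ : ℕ) (v : Fin n → ℝ) : ℝ :=
  sSup {s : ℝ | ∃ S : Finset (Fin n), S.card = Γ ∧ s = ∑ i ∈ S, v i}

/-- The function `g(x,y,α)` from the k = 2 reformulation. -/
noncomputable def g (n : ℕ) (Γn : ℕ) (chat d : Fin n → ℝ) (x y : Fin n → ℝ) (α : ℝ) : ℝ :=
  α * ∑ i, chat i * x i + (1 - α) * ∑ i, chat i * y i +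
    gammaNorm n Γn (fun i => d i * (α * x i + (1 - α) * y i))

/-- `h(α) = min_{x,y ∈ X} g(x,y,α)`. -/
noncomputable def hfun (n : ℕ) (Γn : ℕ) (chat d : Fin n → ℝ)
    (X : Finset (Fin n → ℝ)) (α : ℝ) : ℝ :=
  sInf {w : ℝ | ∃ x ∈ X, ∃ y ∈ X, w = g n Γn chat d x y α}

/-- `underline∂g(x,y) = Σ ĉ_i x_i − Σ ĉ_i y_i − ‖(d_i y_i)_i‖^(Γ)`. -/
noncomputable def lowg (n : ℕ) (Γn : ℕ) (chat d : Fin n → ℝ) (x y : Fin n → ℝ) : ℝ :=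
  (∑ i, chat i * x i) - (∑ i, chat i * y i) - gammaNorm n Γn (fun i => d i * y i)

/-- `overline∂g(x,y) = Σ ĉ_i x_i − Σ ĉ_i y_i + ‖(d_i x_i)_i‖^(Γ)`. -/
noncomputable def upg (n : ℕ) (Γn : ℕ) (chat d : Fin n → ℝ) (x y : Fin n → ℝ) : ℝ :=
  (∑ i, chat i * x i) - (∑ i, chat i * y i) + gammaNorm n Γn (fun i => d i * x i)

lemma gammaNorm_set_nonempty (n Γ : ℕ) (hΓ : Γ ≤ n) (v : Fin n → ℝ) :
    {s : ℝ | ∃ S : Finset (Fin n), S.card = Γ ∧ s = ∑ i ∈ S, v i}.Nonempty := by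
  obtain ⟨S, _, hS⟩ := Finset.exists_subset_card_eq (s := (Finset.univ : Finset (Fin n)))
    (n := Γ) (by simpa using hΓ)
  exact ⟨∑ i ∈ S, v i, S, hS, rfl⟩

lemma gammaNorm_set_finite (n Γ : ℕ) (v : Fin n → ℝ) :
    {s : ℝ | ∃ S : Finset (Fin n), S.card = Γ ∧ s = ∑ i ∈ S, v i}.Finite := by
  apply Set.Finite.subset (Set.finite_range (fun S : Finset (Fin n) => ∑ i ∈ S, v i))
  rintro s ⟨S, _, rfl⟩; exact ⟨S, rfl⟩

lemma le_gammaNorm (n Γ : ℕ) (v : Fin n → ℝ) (S : Finset (Fin n)) (hS : S.card = Γ) :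
    ∑ i ∈ S, v i ≤ gammaNorm n Γ v :=
  le_csSup (gammaNorm_set_finite n Γ v).bddAbove ⟨S, hS, rfl⟩

lemma gammaNorm_attained (n Γ : ℕ) (hΓ : Γ ≤ n) (v : Fin n → ℝ) :
    ∃ S : Finset (Fin n), S.card = Γ ∧ gammaNorm n Γ v = ∑ i ∈ S, v i :=
  (gammaNorm_set_nonempty n Γ hΓ v).csSup_mem (gammaNorm_set_finite n Γ v)

lemma hfun_set_finite (n Γn : ℕ) (chat d : Fin n → ℝ) (X : Finset (Fin n → ℝ)) (α : ℝ) :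
    {w : ℝ | ∃ x ∈ X, ∃ y ∈ X, w = g n Γn chat d x y α}.Finite := by
  apply Set.Finite.subset
    (Set.Finite.image (fun p : (Fin n → ℝ) × (Fin n → ℝ) => g n Γn chat d p.1 p.2 α)
      (X.finite_toSet.prod X.finite_toSet))
  rintro w ⟨x, hx, y, hy, rfl⟩
  exact ⟨(x, y), ⟨hx, hy⟩, rfl⟩

lemma hfun_le (n Γn : ℕ) (chat d : Fin n → ℝ) (X : Finset (Fin n → ℝ)) (α : ℝ)
    {x y : Fin n → ℝ} (hx : x ∈ X) (hy : y ∈ X) :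
    hfun n Γn chat d X α ≤ g n Γn chat d x y α :=
  csInf_le (hfun_set_finite n Γn chat d X α).bddBelow ⟨x, hx, y, hy, rfl⟩

lemma le_hfun (n Γn : ℕ) (chat d : Fin n → ℝ) (X : Finset (Fin n → ℝ)) (hXne : X.Nonempty)
    (α c : ℝ) (h : ∀ x ∈ X, ∀ y ∈ X, c ≤ g n Γn chat d x y α) :
    c ≤ hfun n Γn chat d X α := by
  obtain ⟨x0, hx0⟩ := hXne
  refine le_csInf ⟨g n Γn chat d x0 x0 α, ⟨x0, hx0, x0, hx0, rfl⟩⟩ ?_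
  rintro w ⟨x, hx, y, hy, rfl⟩
  exact h x hx y hy

lemma subgrad_low (n Γn : ℕ) (hΓ : Γn ≤ n) (chat d : Fin n → ℝ) (hd : ∀ i, 0 ≤ d i)
    (x y : Fin n → ℝ) (hx : ∀ i, 0 ≤ x i) (α β : ℝ) (hαβ : β ≤ α) :
    g n Γn chat d x y β + (α - β) * lowg n Γn chat d x y ≤ g n Γn chat d x y α := by
  obtain ⟨S, hS, hSeq⟩ := gammaNorm_attained n Γn hΓ (fun i => d i * (β * x i + (1 - β) * y i))
  have h1 : ∑ i ∈ S, d i * (α * x i + (1 - α) * y i)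
      ≤ gammaNorm n Γn (fun i => d i * (α * x i + (1 - α) * y i)) := le_gammaNorm _ _ _ _ hS
  have h2 : ∑ i ∈ S, d i * y i ≤ gammaNorm n Γn (fun i => d i * y i) := le_gammaNorm _ _ _ _ hS
  have h3 : 0 ≤ ∑ i ∈ S, d i * x i :=
    Finset.sum_nonneg fun i _ => mul_nonneg (hd i) (hx i)
  have hexp : ∑ i ∈ S, d i * (α * x i + (1 - α) * y i)
      = (∑ i ∈ S, d i * (β * x i + (1 - β) * y i))
        + (α - β) * ((∑ i ∈ S, d i * x i) - ∑ i ∈ S, d i * y i) := by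
    have : ∀ i ∈ S, d i * (α * x i + (1 - α) * y i)
        = d i * (β * x i + (1 - β) * y i) + ((α - β) * (d i * x i) - (α - β) * (d i * y i)) :=
      fun i _ => by ring
    rw [Finset.sum_congr rfl this, Finset.sum_add_distrib, Finset.sum_sub_distrib,
      ← Finset.mul_sum, ← Finset.mul_sum]
    ring
  have h4 : (α - β) * (∑ i ∈ S, d i * y i) ≤ (α - β) * gammaNorm n Γn (fun i => d i * y i) :=
    mul_le_mul_of_nonneg_left h2 (by linarith)
  have h5 : 0 ≤ (α - β) * ∑ i ∈ S, d i * x i := mul_nonneg (by linarith) h3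
  unfold g lowg
  rw [hSeq]
  nlinarith [h1, hexp, h4, h5]

lemma subgrad_up (n Γn : ℕ) (hΓ : Γn ≤ n) (chat d : Fin n → ℝ) (hd : ∀ i, 0 ≤ d i)
    (x y : Fin n → ℝ) (hy : ∀ i, 0 ≤ y i) (α β : ℝ) (hαβ : α ≤ β) :
    g n Γn chat d x y β + (α - β) * upg n Γn chat d x y ≤ g n Γn chat d x y α := by
  obtain ⟨S, hS, hSeq⟩ := gammaNorm_attained n Γn hΓ (fun i => d i * (β * x i + (1 - β) * y i))
  have h1 : ∑ i ∈ S, d i * (α * x i + (1 - α) * y i)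
      ≤ gammaNorm n Γn (fun i => d i * (α * x i + (1 - α) * y i)) := le_gammaNorm _ _ _ _ hS
  have h2 : ∑ i ∈ S, d i * x i ≤ gammaNorm n Γn (fun i => d i * x i) := le_gammaNorm _ _ _ _ hS
  have h3 : 0 ≤ ∑ i ∈ S, d i * y i :=
    Finset.sum_nonneg fun i _ => mul_nonneg (hd i) (hy i)
  have hexp : ∑ i ∈ S, d i * (α * x i + (1 - α) * y i)
      = (∑ i ∈ S, d i * (β * x i + (1 - β) * y i))
        + (α - β) * ((∑ i ∈ S, d i * x i) - ∑ i ∈ S, d i * y i) := by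
    have : ∀ i ∈ S, d i * (α * x i + (1 - α) * y i)
        = d i * (β * x i + (1 - β) * y i) + ((α - β) * (d i * x i) - (α - β) * (d i * y i)) :=
      fun i _ => by ring
    rw [Finset.sum_congr rfl this, Finset.sum_add_distrib, Finset.sum_sub_distrib,
      ← Finset.mul_sum, ← Finset.mul_sum]
    ring
  have h4 : (α - β) * gammaNorm n Γn (fun i => d i * x i) ≤ (α - β) * ∑ i ∈ S, d i * x i :=
    mul_le_mul_of_nonpos_left h2 (by linarith)
  have h5 : (α - β) * ∑ i ∈ S, d i * y i ≤ 0 := mul_nonpos_of_nonpos_of_nonneg (by linarith) h3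
  unfold g upg
  rw [hSeq]
  nlinarith [h1, hexp, h4, h5]

/-- Theorem 2.2, interval lower bound. -/
theorem stmt14 (n : ℕ) (hn : 1 ≤ n) (chat d : Fin n → ℝ) (hd : ∀ i, 0 ≤ d i)
    (Γ : ℕ) (hΓ : Γ ≤ n)
    (X : Finset (Fin n → ℝ)) (hXne : X.Nonempty)
    (hX01 : ∀ x ∈ X, ∀ i, x i = 0 ∨ x i = 1)
    (α₁ α₂ : ℝ) (h0 : 0 ≤ α₁) (h12 : α₁ ≤ α₂) (h2 : α₂ ≤ 1 / 2)
    (x₁ y₁ : Fin n → ℝ) (hx₁ : x₁ ∈ X) (hy₁ : y₁ ∈ X)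
    (hmin₁ : ∀ x ∈ X, ∀ y ∈ X,
      g n Γ chat d x₁ y₁ α₁ + (α₂ - α₁) * lowg n Γ chat d x₁ y₁
        ≤ g n Γ chat d x y α₁ + (α₂ - α₁) * lowg n Γ chat d x y)
    (x₂ y₂ : Fin n → ℝ) (hx₂ : x₂ ∈ X) (hy₂ : y₂ ∈ X)
    (hmin₂ : ∀ x ∈ X, ∀ y ∈ X,
      g n Γ chat d x₂ y₂ α₂ + (α₁ - α₂) * upg n Γ chat d x₂ y₂
        ≤ g n Γ chat d x y α₂ + (α₁ - α₂) * upg n Γ chat d x y)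
    (s₁ s₂ : ℝ) (hs₁def : s₁ = lowg n Γ chat d x₁ y₁) (hs₂def : s₂ = upg n Γ chat d x₂ y₂)
    (hs₁ : s₁ ≤ 0) (hs₂ : 0 ≤ s₂) (hs₁₂ : s₁ < s₂)
    (α' : ℝ)
    (hα'def : α' = (hfun n Γ chat d X α₂ - hfun n Γ chat d X α₁ + α₁ * s₁ - α₂ * s₂) / (s₁ - s₂))
    (hα'mem : α' ∈ Set.Icc α₁ α₂) :
    ∀ α ∈ Set.Icc α₁ α₂,
      hfun n Γ chat d X α ≥ hfun n Γ chat d X α₁ + (α' - α₁) * s₁ := by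
  intro α hα
  obtain ⟨hαl, hαr⟩ := hα
  set H1 := hfun n Γ chat d X α₁ with hH1
  set H2 := hfun n Γ chat d X α₂ with hH2
  have hnonneg : ∀ z ∈ X, ∀ i, (0:ℝ) ≤ z i := by
    intro z hz i
    rcases hX01 z hz i with h | h <;> rw [h] <;> norm_num
  -- lower affine bound from α₁ side
  have hf1 : ∀ β, α₁ ≤ β → β ≤ α₂ → H1 + (β - α₁) * s₁ ≤ hfun n Γ chat d X β := by
    intro β hβ1 hβ2
    apply le_hfun n Γ chat d X hXne
    intro x hx y hy
    have sg := subgrad_low n Γ hΓ chat d hd x y (hnonneg x hx) β α₁ hβ1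
    have hA : H1 ≤ g n Γ chat d x y α₁ := hfun_le n Γ chat d X α₁ hx hy
    have hG : H1 ≤ g n Γ chat d x₁ y₁ α₁ := hfun_le n Γ chat d X α₁ hx₁ hy₁
    have hm := hmin₁ x hx y hy
    rw [← hs₁def] at hm
    rcases eq_or_lt_of_le h12 with hT | hT
    · have hβ : β = α₁ := le_antisymm (hT ▸ hβ2) hβ1
      subst hβ
      simp only [sub_self, zero_mul, add_zero] at sg ⊢
      nlinarith [sg]
    · have ht0 : 0 ≤ β - α₁ := by linarith
      have hTt : 0 ≤ α₂ - β := by linarith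
      have p1 := mul_le_mul_of_nonneg_left hm ht0
      have p2 := mul_le_mul_of_nonneg_left hA hTt
      have p3 := mul_le_mul_of_nonneg_left hG ht0
      nlinarith [p1, p2, p3, sg, hT]
  -- lower affine bound from α₂ side
  have hf2 : ∀ β, α₁ ≤ β → β ≤ α₂ → H2 + (β - α₂) * s₂ ≤ hfun n Γ chat d X β := by
    intro β hβ1 hβ2
    apply le_hfun n Γ chat d X hXne
    intro x hx y hy
    have sg := subgrad_up n Γ hΓ chat d hd x y (hnonneg y hy) β α₂ hβ2
    have hA : H2 ≤ g n Γ chat d x y α₂ := hfun_le n Γ chat d X α₂ hx hy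
    have hG : H2 ≤ g n Γ chat d x₂ y₂ α₂ := hfun_le n Γ chat d X α₂ hx₂ hy₂
    have hm := hmin₂ x hx y hy
    rw [← hs₂def] at hm
    rcases eq_or_lt_of_le h12 with hT | hT
    · have hβ : β = α₂ := le_antisymm hβ2 (hT ▸ hβ1)
      subst hβ
      simp only [sub_self, zero_mul, add_zero] at sg ⊢
      nlinarith [sg]
    · have ht0 : β - α₂ ≤ 0 := by linarith
      have hTt : α₁ - β ≤ 0 := by linarith
      have p1 := mul_le_mul_of_nonpos_left hm ht0
      have p2 := mul_le_mul_of_nonpos_left hA hTt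
      have p3 := mul_le_mul_of_nonpos_left hG ht0
      nlinarith [p1, p2, p3, sg, hT]
  -- crossing point equality: H1 + (α'-α₁)s₁ = H2 + (α'-α₂)s₂
  have hcross : H1 + (α' - α₁) * s₁ = H2 + (α' - α₂) * s₂ := by
    have hne : s₁ - s₂ ≠ 0 := by linarith
    have : α' * (s₁ - s₂) = H2 - H1 + α₁ * s₁ - α₂ * s₂ := by
      rw [hα'def]; field_simp
    linear_combination this
  obtain ⟨hα'1, hα'2⟩ := hα'mem
  rcases le_total α α' with hcase | hcase
  · have hb := hf1 α hαl hαr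
    have hp : α' * s₁ ≤ α * s₁ := mul_le_mul_of_nonpos_right hcase hs₁
    have e1 : (α - α₁) * s₁ = α * s₁ - α₁ * s₁ := by ring
    have e2 : (α' - α₁) * s₁ = α' * s₁ - α₁ * s₁ := by ring
    linarith
  · have hb := hf2 α hαl hαr
    have hp : α' * s₂ ≤ α * s₂ := mul_le_mul_of_nonneg_right hcase hs₂
    have e1 : (α - α₂) * s₂ = α * s₂ - α₂ * s₂ := by ring
    have e2 : (α' - α₂) * s₂ = α' * s₂ - α₂ * s₂ := by ring
    linarith
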